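/- Let V be a nonempty countable set and b : P(V) → [0,∞] satisfy conditions (0), (1) symmetry, (2) submodularity, (3) monotone-continuity, and (4) finiteness of λ_b. If X is an optimal s-t cut, then X has a ≺_X-minimal element, and for every ≺_X-minimal element s' of X, X is an optimal s'-t cut, i.e. b(X) = λ_b(s', t). -/

import Mathlib

/-! Without a minimal element there is an infinite `≺_X`-descending chain `x` from `s`, chosen
greedily with respect to an enumeration of `V`. By uncrossing, `≺_X` is transitive, so the chain is injective and every
element of it is at least `λ_b(s,t)`-connected to `t`. Let `A m` be the least cut separating
`x (m+1)` from `x m`; it contains `t`. If some `A m` misses infinitely many `x n`, uncrossing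
makes `x (m+1)` a predecessor of all those `x n`, contradicting the greedy choice of `x (n+1)`.
Otherwise every `A m` eventually contains the chain, and the sets `(⋂ m < N, A m) \ ⋂ m, A m`
decrease to `∅` while `b` stays at least `λ_b(s,t) > 0` on them, contradicting continuity.

For a minimal `s'`, `X_{s,s'} ⊆ X` is also an `s-t` cut, whence
`λ_b(s',t) ≥ min (λ_b(s',s), λ_b(s,t)) = λ_b(s,t) = b(X)`. -/

open Set Filter Topology ENNReal

noncomputable section

/-- `λ_b(u,v)`: the infimum of `b(X)` over all `u-v` cuts `X`
(sets with `u ∈ X` and `v ∉ X`). -/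
def lamB {V : Type*} (b : Set V → ℝ≥0∞) (u v : V) : ℝ≥0∞ :=
  ⨅ (X : Set V) (_ : u ∈ X ∧ v ∉ X), b X

/-- `X` is an optimal `u-v` cut: a `u-v` cut with `b(X) = λ_b(u,v)`. -/
def IsOptCut {V : Type*} (b : Set V → ℝ≥0∞) (u v : V) (X : Set V) : Prop :=
  u ∈ X ∧ v ∉ X ∧ b X = lamB b u v

section Cuts

variable {V : Type*} {b : Set V → ℝ≥0∞}

lemma lamB_le {u v : V} {Y : Set V} (hu : u ∈ Y) (hv : v ∉ Y) : lamB b u v ≤ b Y :=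
  iInf₂_le Y ⟨hu, hv⟩

lemma lamB_comm (hco : ∀ Y : Set V, b Yᶜ = b Y) (u v : V) : lamB b u v = lamB b v u := by
  have key : ∀ x y : V, lamB b x y ≤ lamB b y x := fun x y =>
    le_iInf₂ fun Y hY => by
      simpa [hco] using lamB_le (b := b) (Y := Yᶜ) hY.2 (by simpa using hY.1)
  exact le_antisymm (key u v) (key v u)

lemma min_lamB_le_lamB (u v w : V) : min (lamB b u v) (lamB b v w) ≤ lamB b u w := by
  refine le_iInf₂ fun Y hY => ?_
  by_cases hv : v ∈ Y
  · exact (min_le_right _ _).trans (lamB_le hv hY.2)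
  · exact (min_le_left _ _).trans (lamB_le hY.1 hv)

lemma IsOptCut.compl (hco : ∀ Y : Set V, b Yᶜ = b Y) {u v : V} {Y : Set V}
    (hY : IsOptCut b u v Y) : IsOptCut b v u Yᶜ :=
  ⟨hY.2.1, not_not.2 hY.1, by rw [hco, hY.2.2, lamB_comm hco]⟩

lemma lamB_le_lamB_of_isOptCut (hco : ∀ Y : Set V, b Yᶜ = b Y) {u w t : V} {Y : Set V}
    (hY : IsOptCut b w u Y) (ht : t ∈ Y) : lamB b u t ≤ lamB b w t := by
  have hut : lamB b u t ≤ lamB b w u := by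
    rw [lamB_comm hco, ← hY.2.2]
    exact lamB_le ht hY.2.1
  exact (le_min hut le_rfl).trans (min_lamB_le_lamB w u t)

end Cuts

section LeastCuts

variable {V : Type*} {b : Set V → ℝ≥0∞} {Xm : V → V → Set V}
  (hco : ∀ Y : Set V, b Yᶜ = b Y)
  (hsm : ∀ Y Z : Set V, b (Y ∩ Z) + b (Y ∪ Z) ≤ b Y + b Z)
  (hfin : ∀ u v : V, u ≠ v → lamB b u v < ⊤)
  (hXm : ∀ u v : V, u ≠ v → IsLeast {Y : Set V | IsOptCut b u v Y} (Xm u v))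

variable (Xm) in
/-- For `u, v ∈ X` with `X` an optimal `s-t` cut, `PrecAt Xm t u v` is `u ≺_X v`
(see `precAt_of_not_subset`). -/
def PrecAt (t u v : V) : Prop :=
  u ≠ v ∧ t ∈ Xm u v

include hXm

lemma Xm_subset_of_le {u v : V} (huv : u ≠ v) {Y : Set V} (hu : u ∈ Y) (hv : v ∉ Y)
    (hY : b Y ≤ lamB b u v) : Xm u v ⊆ Y :=
  (hXm u v huv).2 ⟨hu, hv, le_antisymm hY (lamB_le hu hv)⟩

include hco in
lemma Xm_subset_compl_Xm_swap {u v : V} (huv : u ≠ v) :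
    Xm u v ⊆ (Xm v u)ᶜ :=
  (hXm u v huv).2 ((hXm v u huv.symm).1.compl hco)

include hsm hfin

/-- Uncrossing: `b (Xm u v ∩ Y) + b (Xm u v ∪ Y) ≤ λ_b(u,v) + λ_b(p,q)`, and the union is
still a `p-q` cut, so the intersection is an optimal `u-v` cut. -/
lemma Xm_subset_of_isOptCut {u v p q : V} (huv : u ≠ v) {Y : Set V} (hY : IsOptCut b p q Y)
    (hu : u ∈ Y) (hq : q ∉ Xm u v) : Xm u v ⊆ Y := by
  obtain ⟨⟨huA, hvA, hbA⟩, -⟩ := hXm u v huv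
  obtain ⟨hp, hqY, hbY⟩ := hY
  have hpq : p ≠ q := fun h => hqY (h ▸ hp)
  have hsum : b (Xm u v ∩ Y) + lamB b p q ≤ lamB b u v + lamB b p q :=
    calc b (Xm u v ∩ Y) + lamB b p q
        ≤ b (Xm u v ∩ Y) + b (Xm u v ∪ Y) := by
          gcongr; exact lamB_le (Or.inr hp) (by simp [hq, hqY])
      _ ≤ lamB b u v + lamB b p q := hbA ▸ hbY ▸ hsm _ _
  have hinter := ENNReal.le_of_add_le_add_right (hfin p q hpq).ne hsum
  exact (Xm_subset_of_le hXm huv (Y := Xm u v ∩ Y) ⟨huA, hu⟩ (fun h => hvA h.1) hinter).trans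
    inter_subset_right

lemma precAt_of_not_mem {t u v z : V} (huv : PrecAt Xm t u v) (hz : z ∉ Xm u v) :
    PrecAt Xm t u z := by
  have huz : u ≠ z := fun h => hz (h ▸ (hXm u v huv.1).1.1)
  exact ⟨huz, Xm_subset_of_isOptCut hsm hfin hXm huv.1 (hXm u z huz).1
    (hXm u z huz).1.1 hz huv.2⟩

lemma precAt_of_not_subset {s t u v : V} {X : Set V} (hX : IsOptCut b s t X) (hu : u ∈ X)
    (huv : u ≠ v) (h : ¬ Xm u v ⊆ X) : PrecAt Xm t u v :=
  ⟨huv, by_contra fun ht => h (Xm_subset_of_isOptCut hsm hfin hXm huv hX hu ht)⟩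

include hco

lemma precAt_trans {t u v w : V} (huv : PrecAt Xm t u v) (hvw : PrecAt Xm t v w) :
    PrecAt Xm t u w := by
  obtain ⟨huv, htA⟩ := huv
  obtain ⟨hvw, htB⟩ := hvw
  have huw : u ≠ w := by
    rintro rfl
    exact Xm_subset_compl_Xm_swap hco hXm huv htA htB
  refine ⟨huw, by_contra fun htC => ?_⟩
  obtain ⟨⟨huA, hvA, hbA⟩, -⟩ := hXm u v huv
  obtain ⟨⟨hvB, hwB, hbB⟩, -⟩ := hXm v w hvw
  have hC := (hXm u w huw).1
  have hwA : w ∈ Xm u v := by_contra fun h =>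
    htC (Xm_subset_of_isOptCut hsm hfin hXm huv hC hC.1 h htA)
  have hvC : v ∉ Xm u w := fun h =>
    htC (Xm_subset_of_isOptCut hsm hfin hXm hvw hC h hwB htB)
  have huB : u ∈ Xm v w := by_contra fun h =>
    Xm_subset_of_isOptCut hsm hfin hXm hvw ((hXm u v huv).1.compl hco) hvA h htB htA
  have hle : b (Xm u w) ≤ lamB b u v :=
    calc b (Xm u w) = lamB b u w := hC.2.2
      _ ≤ lamB b v w := hbB ▸ lamB_le huB hwB
      _ = lamB b w v := lamB_comm hco v w
      _ ≤ lamB b u v := hbA ▸ lamB_le hwA hvA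
  exact htC (Xm_subset_of_le hXm huv hC.1 hvC hle htA)

end LeastCuts

lemma exists_greedy_chain {α : Type*} (r : α → α → Prop) {S : Set α} (enc : α → ℕ)
    (hS : ∀ v ∈ S, ∃ u ∈ S, r u v) {a : α} (ha : a ∈ S) :
    ∃ x : ℕ → α, x 0 = a ∧ (∀ n, x n ∈ S) ∧ (∀ n, r (x (n + 1)) (x n)) ∧
      ∀ n, ∀ u ∈ S, r u (x n) → enc (x (n + 1)) ≤ enc u := by
  have hnext : ∀ v : S, ∃ u : S, r u v ∧ ∀ w ∈ S, r w v → enc u ≤ enc w := by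
    rintro ⟨v, hv⟩
    have hne : {u | u ∈ S ∧ r u v}.Nonempty := hS v hv
    obtain ⟨hmem, hr⟩ := Function.argminOn_mem enc _ hne
    exact ⟨⟨_, hmem⟩, hr, fun w hw hwv =>
      Function.argminOn_le enc {u | u ∈ S ∧ r u v} (a := w) ⟨hw, hwv⟩⟩
  choose next hr hmin using hnext
  refine ⟨fun n => (next^[n] ⟨a, ha⟩).1, rfl, fun n => (next^[n] ⟨a, ha⟩).2, fun n => ?_,
    fun n => ?_⟩
  · simpa only [Function.iterate_succ_apply'] using hr _
  · simpa only [Function.iterate_succ_apply'] using hmin _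

/-- The sets `(⋂ m < N, A m) \ ⋂ m, A m` decrease to `∅`, and each separates some `x n`
from `t`. -/
lemma eq_zero_of_le_lamB_of_eventually_mem {V : Type*} {b : Set V → ℝ≥0∞}
    (h3a : ∀ X : ℕ → Set V, Antitone X → Tendsto (fun n => b (X n)) atTop (𝓝 (b (⋂ n, X n))))
    (hb0 : b ∅ = 0) {A : ℕ → Set V} {x : ℕ → V} {t : V} {β : ℝ≥0∞}
    (hxA : ∀ n, x n ∉ A n) (htA : ∀ m, t ∈ A m) (hev : ∀ m, ∀ᶠ n in atTop, x n ∈ A m)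
    (hβ : ∀ n, β ≤ lamB b (x n) t) : β = 0 := by
  set R : ℕ → Set V := fun N => (⋂ m < N, A m) \ ⋂ m, A m
  have hR : Antitone R := fun N M hNM =>
    sdiff_subset_sdiff_left (biInter_subset_biInter_left fun m hm => lt_of_lt_of_le hm hNM)
  have hRempty : ⋂ N, R N = ∅ := by
    refine eq_empty_of_forall_notMem fun y hy => (mem_iInter.1 hy 0).2 (mem_iInter.2 fun m => ?_)
    exact mem_iInter₂.1 (mem_iInter.1 hy (m + 1)).1 m m.lt_succ_self
  have hβR : ∀ N, β ≤ b (R N) := by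
    intro N
    obtain ⟨n, hn⟩ := ((finite_Iio N).eventually_all.2 fun m _ => hev m).exists
    exact (hβ n).trans (lamB_le ⟨mem_iInter₂.2 hn, fun h => hxA n (mem_iInter.1 h n)⟩
      fun h => h.2 (mem_iInter.2 htA))
  have hlim := h3a R hR
  rw [hRempty, hb0] at hlim
  exact nonpos_iff_eq_zero.1 (ge_of_tendsto' hlim hβR)

section Minimal

variable {V : Type*} {b : Set V → ℝ≥0∞} {Xm : V → V → Set V} {s t : V} {X : Set V}
  (hco : ∀ Y : Set V, b Yᶜ = b Y)
  (hsm : ∀ Y Z : Set V, b (Y ∩ Z) + b (Y ∪ Z) ≤ b Y + b Z)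
  (h3a : ∀ X : ℕ → Set V, Antitone X → Tendsto (fun n => b (X n)) atTop (𝓝 (b (⋂ n, X n))))
  (hfin : ∀ u v : V, u ≠ v → lamB b u v < ⊤)
  (hXm : ∀ u v : V, u ≠ v → IsLeast {Y : Set V | IsOptCut b u v Y} (Xm u v))

include hco hXm in
lemma isOptCut_of_minimal (hX : IsOptCut b s t X) {s' : V} (hs' : s' ∈ X)
    (hmin : ∀ u ∈ X, ¬ (u ≠ s' ∧ ¬ Xm u s' ⊆ X)) : IsOptCut b s' t X := by
  obtain ⟨hs, ht, hbX⟩ := hX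
  refine ⟨hs', ht, le_antisymm ?_ (lamB_le hs' ht)⟩
  by_cases hss' : s = s'
  · exact hss' ▸ hbX.le
  obtain ⟨⟨hsA, -, hbA⟩, -⟩ := hXm s s' hss'
  have hsub : Xm s s' ⊆ X := not_not.1 fun h => hmin s hs ⟨hss', h⟩
  have hst : lamB b s t ≤ lamB b s' s := by
    rw [lamB_comm hco s', ← hbA]
    exact lamB_le hsA fun h => ht (hsub h)
  exact hbX ▸ (le_min hst le_rfl).trans (min_lamB_le_lamB s' s t)

include hco hsm h3a hfin hXm in
lemma exists_minimal [Countable V] (hb0 : b ∅ = 0) (hX : IsOptCut b s t X)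
    (hpos : lamB b s t ≠ 0) :
    ∃ s' ∈ X, ∀ u ∈ X, ¬ (u ≠ s' ∧ ¬ Xm u s' ⊆ X) := by
  by_contra! hnomin
  obtain ⟨enc, henc⟩ := Countable.exists_injective_nat V
  obtain ⟨x, hx0, hxX, hsucc, hgreedy⟩ := exists_greedy_chain (PrecAt Xm t) enc
    (fun v hv => let ⟨u, hu, huv, hsub⟩ := hnomin v hv
      ⟨u, hu, precAt_of_not_subset hsm hfin hXm hX hu huv hsub⟩) hX.1
  have : IsTrans V (flip (PrecAt Xm t)) :=
    ⟨fun _ _ _ h₁ h₂ => precAt_trans hco hsm hfin hXm h₂ h₁⟩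
  have hchain : ∀ ⦃n m⦄, n < m → PrecAt Xm t (x m) (x n) :=
    Nat.rel_of_forall_rel_succ_of_lt (flip (PrecAt Xm t)) hsucc
  have hinj : Function.Injective x := fun n m hnm => by
    by_contra hne
    rcases Nat.lt_or_gt_of_ne hne with h | h
    exacts [(hchain h).1 hnm.symm, (hchain h).1 hnm]
  set A : ℕ → Set V := fun m => Xm (x (m + 1)) (x m)
  by_cases hev : ∀ m, ∀ᶠ n in atTop, x n ∈ A m
  · refine hpos (eq_zero_of_le_lamB_of_eventually_mem h3a hb0 (A := A)
      (fun n => (hXm _ _ (hsucc n).1).1.2.1) (fun m => (hsucc m).2) hev fun n => ?_)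
    rcases n.eq_zero_or_pos with rfl | hn
    · exact hx0 ▸ le_rfl
    · exact hx0 ▸ lamB_le_lamB_of_isOptCut hco (hXm _ _ (hchain hn).1).1 (hchain hn).2
  · obtain ⟨m, hm⟩ := not_forall.1 hev
    have hbdd : ∃ᶠ n in atTop, enc (x (n + 1)) ≤ enc (x (m + 1)) :=
      (not_eventually.1 hm).mono fun n hn => hgreedy n _ (hxX (m + 1)) <|
        precAt_of_not_mem hsm hfin hXm (hsucc m) hn
    have hunbdd : ∀ᶠ n in atTop, enc (x (m + 1)) < enc (x (n + 1)) :=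
      ((henc.comp (hinj.comp (add_left_injective 1))).nat_tendsto_atTop).eventually_gt_atTop _
    obtain ⟨n, hle, hlt⟩ := (hbdd.and_eventually hunbdd).exists
    exact (hle.trans_lt hlt).false

end Minimal

theorem exists_minimal_and_realizes_general {V : Type*} [Countable V]
    (b : Set V → ℝ≥0∞)
    (h0 : ∀ X : Set V, b X = 0 ↔ X = ∅ ∨ X = Set.univ)
    (h1 : ∀ X : Set V, b Xᶜ = b X)
    (h2 : ∀ X Y : Set V, b (X ∩ Y) + b (X ∪ Y) ≤ b X + b Y)
    (h3a : ∀ X : ℕ → Set V, Antitone X →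
      Filter.Tendsto (fun n => b (X n)) Filter.atTop (nhds (b (⋂ n, X n))))
    (h4 : ∀ u v : V, u ≠ v → lamB b u v < ⊤)
    (Xm : V → V → Set V)
    (hXm : ∀ u v : V, u ≠ v → IsLeast {Y : Set V | IsOptCut b u v Y} (Xm u v))
    (s t : V) (X : Set V) (hX : IsOptCut b s t X) :
    (∃ s' ∈ X, ∀ u ∈ X, ¬ (u ≠ s' ∧ ¬ Xm u s' ⊆ X)) ∧
    (∀ s' ∈ X, (∀ u ∈ X, ¬ (u ≠ s' ∧ ¬ Xm u s' ⊆ X)) → IsOptCut b s' t X) := by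
  have hb0 : b ∅ = 0 := (h0 ∅).2 (Or.inl rfl)
  have hpos : lamB b s t ≠ 0 := by
    rw [← hX.2.2, Ne, h0, not_or]
    exact ⟨(nonempty_of_mem hX.1).ne_empty, fun h => hX.2.1 (h ▸ mem_univ t)⟩
  exact ⟨exists_minimal h1 h2 h3a h4 hXm hb0 hX hpos,
    fun s' hs' hmin => isOptCut_of_minimal h1 hXm hX hs' hmin⟩

/-- Every optimal `s-t` cut `X` has a `≺_X`-minimal element, and for every `≺_X`-minimal
element `s'` of `X`, `X` is an optimal `s'-t` cut. Here `u ≺_X v` means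
`u ≠ v ∧ ¬ X_{u,v} ⊆ X`, with `X_{u,v}` the `⊆`-smallest optimal `u-v` cut. -/
theorem exists_minimal_and_realizes {V : Type*} [Countable V] [Nonempty V]
    (b : Set V → ℝ≥0∞)
    (h0 : ∀ X : Set V, b X = 0 ↔ X = ∅ ∨ X = Set.univ)
    (h1 : ∀ X : Set V, b Xᶜ = b X)
    (h2 : ∀ X Y : Set V, b (X ∩ Y) + b (X ∪ Y) ≤ b X + b Y)
    (h3m : ∀ X : ℕ → Set V, Monotone X →
      Filter.Tendsto (fun n => b (X n)) Filter.atTop (nhds (b (⋃ n, X n))))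
    (h3a : ∀ X : ℕ → Set V, Antitone X →
      Filter.Tendsto (fun n => b (X n)) Filter.atTop (nhds (b (⋂ n, X n))))
    (h4 : ∀ u v : V, u ≠ v → lamB b u v < ⊤)
    (Xm : V → V → Set V)
    (hXm : ∀ u v : V, u ≠ v → IsLeast {Y : Set V | IsOptCut b u v Y} (Xm u v))
    (s t : V) (hst : s ≠ t) (X : Set V) (hX : IsOptCut b s t X) :
    (∃ s' ∈ X, ∀ u ∈ X, ¬ (u ≠ s' ∧ ¬ Xm u s' ⊆ X)) ∧
    (∀ s' ∈ X, (∀ u ∈ X, ¬ (u ≠ s' ∧ ¬ Xm u s' ⊆ X)) → IsOptCut b s' t X) :=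
  exists_minimal_and_realizes_general b h0 h1 h2 h3a h4 Xm hXm s t X hX
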